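/- Sum rule with no unmarked singletons: for every k >= 0, sum over ell from 0 to k of (1/ell!) * beta_ell * |A~_k^{(ell)}| = (Q-1)^k as polynomials in Q, where |A~_k^{(ell)}| = ell! * sum_{p=0}^{k} binomial(k,p) S(p,ell) S'_{k-p} counts marked partitions of a k-set with ell marked distinguishable blocks such that every unmarked block has at least two elements; here S'_n is the number of partitions of an n-set with no singletons, and beta_ell = sum_{i=0}^{ell} (-1)^{ell-i} binomial(ell,i) Q^{falling i}. -/

import Mathlib

open Finset Polynomial

/-- The Stirling number of the second kind: the number of set partitions of an
`n`-element set into exactly `s` blocks. -/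
noncomputable def stirling (n s : ℕ) : ℕ :=
  Nat.card {P : Finpartition (Finset.univ : Finset (Fin n)) // P.parts.card = s}

/-- `β_ℓ(Q) = ∑_{i=0}^{ℓ} (-1)^{ℓ-i} C(ℓ,i) Q^{falling i}`. -/
noncomputable def beta (ℓ : ℕ) (Q : ℚ) : ℚ :=
  ∑ i ∈ Finset.range (ℓ + 1),
    (-1) ^ (ℓ - i) * (ℓ.choose i : ℚ) * (descPochhammer ℚ i).eval Q

/-- The number of set partitions of an `n`-element set with no singleton
blocks. -/
noncomputable def noSingletonPartitions (n : ℕ) : ℕ :=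
  Nat.card {P : Finpartition (Finset.univ : Finset (Fin n)) //
    ∀ b ∈ P.parts, 2 ≤ b.card}


/-!
Write `(f ⋆ g) s = ∑_{t ⊆ s} f t * g (s \ t)` for the subset convolution of functions on finite
sets. Marking a subset of the blocks of a partition `P` of `s` is the same as choosing `t ⊆ s`
together with a partition of `t` and one of `s \ t`; hence summing over partitions a function of
the set of blocks turns `⋆` on sets of blocks into `⋆` on ground sets.

Now `β_{#T} = ((Q)_{#·} ⋆ (-1)^{#·}) T`, and counting maps `s → Fin m` by their kernels gives
`∑_P (Q)_{#P} = Q^{#s}` for `Q = m`, hence as a polynomial identity. So the left-hand side is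
`(Q^{#·} ⋆ c ⋆ S') [k]` with `c s = ∑_P (-1)^{#P}`. Finally `c ⋆ S'` is the sum over partitions
of `∏_{b ∈ P} (-1 + [2 ≤ #b])`, which vanishes unless `P` is discrete, so `c ⋆ S' = (-1)^{#·}`
and the binomial theorem gives `(Q - 1)^k`.
-/

section SubsetConvolution
variable {ι R : Type*} [DecidableEq ι] [CommSemiring R]

def subsetConv (f g : Finset ι → R) (s : Finset ι) : R :=
  ∑ t ∈ s.powerset, f t * g (s \ t)

theorem subsetConv_assoc (f g h : Finset ι → R) (s : Finset ι) :
    subsetConv (subsetConv f g) h s = subsetConv f (subsetConv g h) s := by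
  simp only [subsetConv, sum_mul, mul_sum, mul_assoc]
  rw [sum_comm' (t' := s.powerset) (s' := fun u => s.powerset.filter (u ⊆ ·)) fun t u => by
    simp only [mem_powerset, mem_filter]
    exact ⟨fun h => ⟨⟨h.1, h.2⟩, h.2.trans h.1⟩, fun h => ⟨h.1.1, h.1.2⟩⟩]
  refine sum_congr rfl fun u hu => ?_
  refine sum_nbij' (· \ u) (u ∪ ·) ?_ ?_ ?_ ?_ ?_ <;> simp only [mem_filter, mem_powerset] at hu ⊢
  · exact fun t ht => sdiff_subset_sdiff ht.1 subset_rfl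
  · exact fun v hv => ⟨union_subset hu (hv.trans sdiff_subset), subset_union_left⟩
  · exact fun t ht => union_sdiff_of_subset ht.2
  · exact fun v hv => union_sdiff_cancel_left (disjoint_of_subset_right hv disjoint_sdiff)
  · intro t ht
    rw [sdiff_sdiff_left, sup_sdiff_cancel_right ht.2]

theorem prod_subsetConv (f g : ι → R) (s : Finset ι) :
    subsetConv (fun t => ∏ i ∈ t, f i) (fun t => ∏ i ∈ t, g i) s = ∏ i ∈ s, (f i + g i) :=
  (prod_add f g s).symm

theorem subsetConv_card (f g : ℕ → R) (s : Finset ι) :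
    subsetConv (fun t => f #t) (fun t => g #t) s =
      ∑ p ∈ range (#s + 1), (#s).choose p * (f p * g (#s - p)) := by
  rw [subsetConv, sum_congr rfl fun t ht => by rw [card_sdiff_of_subset (mem_powerset.1 ht)],
    sum_powerset_apply_card (fun p => f p * g (#s - p))]
  simp only [nsmul_eq_mul]

end SubsetConvolution

namespace Finpartition

section Marking
variable {α R : Type*} [DecidableEq α] [CommSemiring R] {s t : Finset α}

def union (P : Finpartition s) (Q : Finpartition t) (hst : Disjoint s t) :
    Finpartition (s ∪ t) where
  parts := P.parts ∪ Q.parts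
  supIndep := by
    rw [supIndep_iff_pairwiseDisjoint, coe_union]
    exact P.disjoint.union Q.disjoint fun b hb c hc _ => hst.mono (P.le hb) (Q.le hc)
  sup_parts := by rw [sup_union, P.sup_parts, Q.sup_parts, sup_eq_union]
  bot_notMem := by simp

theorem disjoint_parts (P : Finpartition s) (Q : Finpartition t) (hst : Disjoint s t) :
    Disjoint P.parts Q.parts :=
  disjoint_left.2 fun _ hP hQ =>
    (P.nonempty_of_mem_parts hP).ne_empty (disjoint_self.1 (hst.mono (P.le hP) (Q.le hQ)))

theorem sup_parts_sdiff (P : Finpartition s) {T : Finset (Finset α)} (hT : T ⊆ P.parts) :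
    (P.parts \ T).sup id = s \ T.sup id := by
  have hdisj : Disjoint (T.sup id) ((P.parts \ T).sup id) :=
    P.supIndep.disjoint_sup_sup hT sdiff_subset disjoint_sdiff
  refine (union_sdiff_cancel_left hdisj).symm.trans ?_
  rw [← sup_eq_union, ← sup_union, union_sdiff_of_subset hT, P.sup_parts]

theorem sum_subsetConv_parts (F G : Finset (Finset α) → R) (s : Finset α) :
    ∑ P : Finpartition s, subsetConv F G P.parts =
      subsetConv (fun t => ∑ P : Finpartition t, F P.parts)
        (fun t => ∑ P : Finpartition t, G P.parts) s := by
  unfold subsetConv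
  have hmaps (P : Finpartition s) : ∀ T ∈ P.parts.powerset, T.sup id ∈ s.powerset :=
    fun T hT => mem_powerset.2 (Finset.sup_le fun b hb => P.le (mem_powerset.1 hT hb))
  simp_rw [← sum_fiberwise_of_maps_to (hmaps _), sum_mul_sum]
  rw [sum_comm]
  refine sum_congr rfl fun J hJ => ?_
  rw [sum_sigma', ← sum_product']
  have hmem {x : Σ _ : Finpartition s, Finset (Finset α)}
      (hx : x ∈ univ.sigma fun P => {T ∈ P.parts.powerset | T.sup id = J}) :
      x.2 ⊆ x.1.parts ∧ x.2.sup id = J := by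
    simpa using hx
  refine sum_bij'
    (fun x hx => (x.1.ofSubset (hmem hx).1 (hmem hx).2,
      x.1.ofSubset sdiff_subset (by rw [sup_parts_sdiff _ (hmem hx).1, (hmem hx).2])))
    (fun y _ => ⟨(y.1.union y.2 disjoint_sdiff).copy (union_sdiff_of_subset (mem_powerset.1 hJ)),
      y.1.parts⟩)
    (by simp) (fun y _ => by simpa using ⟨subset_union_left, y.1.sup_parts⟩)
    (fun x hx => ?_) (fun y _ => ?_) fun _ _ => rfl
  · ext1
    · ext1
      exact union_sdiff_of_subset (hmem hx).1
    · rfl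
  · ext1
    · ext1; rfl
    · ext1
      exact union_sdiff_cancel_left (disjoint_parts y.1 y.2 disjoint_sdiff)

theorem eq_bot_of_forall_card_le_one (P : Finpartition s) (h : ∀ b ∈ P.parts, #b ≤ 1) :
    P = ⊥ := by
  ext b
  refine ⟨fun hb => ?_, fun hb => ?_⟩
  · obtain ⟨a, rfl⟩ := card_eq_one.1 ((h b hb).antisymm (P.nonempty_of_mem_parts hb).card_pos)
    exact mem_bot_iff.2 ⟨a, P.le hb (mem_singleton_self a), rfl⟩
  · obtain ⟨a, ha, rfl⟩ := mem_bot_iff.1 hb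
    obtain ⟨c, hc⟩ := card_eq_one.1 ((h _ (P.part_mem.2 ha)).antisymm
      (P.part_nonempty.2 ha).card_pos)
    have hac : a = c := mem_singleton.1 (hc ▸ P.mem_part_self.2 ha)
    exact hac ▸ hc ▸ P.part_mem.2 ha

theorem sum_prod_parts_of_eq_zero (w : Finset α → R) (hw : ∀ b, 2 ≤ #b → w b = 0)
    (s : Finset α) : ∑ P : Finpartition s, ∏ b ∈ P.parts, w b = ∏ a ∈ s, w {a} := by
  rw [sum_eq_single ⊥ (fun P _ hP => ?_) (by simp), parts_bot, prod_map]
  · rfl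
  obtain ⟨b, hb, hcard⟩ : ∃ b ∈ P.parts, 2 ≤ #b := by
    by_contra! h
    exact hP (P.eq_bot_of_forall_card_le_one fun b hb => Nat.le_of_lt_succ (h b hb))
  exact prod_eq_zero hb (hw b hcard)

end Marking

section Transfer
variable {α β : Type*} [DecidableEq α] {s : Finset α} {t : Finset β}

def transferBlock (e : s ≃ t) (b : Finset α) : Finset β :=
  (b.subtype (· ∈ s)).map (e.toEmbedding.trans (Function.Embedding.subtype _))

theorem mem_transferBlock {e : s ≃ t} {b : Finset α} {y : β} :
    y ∈ transferBlock e b ↔ ∃ hy : y ∈ t, (e.symm ⟨y, hy⟩ : α) ∈ b := by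
  simp only [transferBlock, mem_map, mem_subtype, Function.Embedding.trans_apply,
    Equiv.coe_toEmbedding, Function.Embedding.subtype_apply]
  constructor
  · rintro ⟨x, hx, rfl⟩
    exact ⟨(e x).2, by simpa using hx⟩
  · rintro ⟨hy, hb⟩
    exact ⟨_, hb, by simp⟩

theorem transferBlock_subset (e : s ≃ t) (b : Finset α) : transferBlock e b ⊆ t :=
  fun _ hy => (mem_transferBlock.1 hy).1

theorem card_transferBlock (e : s ≃ t) {b : Finset α} (hb : b ⊆ s) :
    #(transferBlock e b) = #b := by
  rw [transferBlock, card_map, card_subtype, filter_true_of_mem hb]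

variable [DecidableEq β]

theorem transferBlock_symm (e : s ≃ t) {b : Finset α} (hb : b ⊆ s) :
    transferBlock e.symm (transferBlock e b) = b := by
  ext x
  simp only [mem_transferBlock, Equiv.symm_symm]
  exact ⟨fun ⟨_, _, h⟩ => by simpa using h, fun h => ⟨hb h, (e ⟨x, hb h⟩).2, by simpa using h⟩⟩

def transfer (e : s ≃ t) (P : Finpartition s) : Finpartition t :=
  ofExistsUnique (P.parts.image (transferBlock e))
    (by simpa using fun b _ => transferBlock_subset e b)
    (fun y hy => by
      obtain ⟨b, hb, hxb⟩ := P.exists_mem (e.symm ⟨y, hy⟩).2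
      refine ⟨transferBlock e b, ⟨mem_image_of_mem _ hb, mem_transferBlock.2 ⟨hy, hxb⟩⟩, ?_⟩
      rintro _ ⟨hc', hyc⟩
      obtain ⟨c, hc, rfl⟩ := mem_image.1 hc'
      obtain ⟨_, hxc⟩ := mem_transferBlock.1 hyc
      rw [P.eq_of_mem_parts hc hb hxc hxb])
    (by
      simp only [mem_image, not_exists, not_and]
      intro b hb h
      have := card_transferBlock e (P.le hb)
      rw [h, card_empty] at this
      exact (P.nonempty_of_mem_parts hb).ne_empty (card_eq_zero.1 this.symm))

theorem transfer_parts (e : s ≃ t) (P : Finpartition s) :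
    (transfer e P).parts = P.parts.image (transferBlock e) := rfl

theorem injOn_transferBlock (e : s ≃ t) (P : Finpartition s) :
    Set.InjOn (transferBlock e) P.parts := fun b hb c hc h => by
  rw [← transferBlock_symm e (P.le hb), h, transferBlock_symm e (P.le hc)]

theorem transfer_symm_transfer (e : s ≃ t) (P : Finpartition s) :
    transfer e.symm (transfer e P) = P := by
  ext1
  rw [transfer_parts, transfer_parts, image_image]
  exact (image_congr fun b hb => transferBlock_symm e (P.le hb)).trans image_id

def transferEquiv (e : s ≃ t) : Finpartition s ≃ Finpartition t where
  toFun := transfer e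
  invFun := transfer e.symm
  left_inv := transfer_symm_transfer e
  right_inv := transfer_symm_transfer e.symm

theorem sum_card_parts_congr {M : Type*} [AddCommMonoid M] (e : s ≃ t) (f : ℕ → M) :
    ∑ P : Finpartition s, f #P.parts = ∑ P : Finpartition t, f #P.parts :=
  Fintype.sum_equiv (transferEquiv e) _ _ fun P => by
    rw [transferEquiv, Equiv.coe_fn_mk, transfer_parts,
      card_image_of_injOn (injOn_transferBlock e P)]

theorem sum_prod_card_congr {M : Type*} [CommSemiring M] (e : s ≃ t) (w : ℕ → M) :
    ∑ P : Finpartition s, ∏ b ∈ P.parts, w #b = ∑ P : Finpartition t, ∏ b ∈ P.parts, w #b :=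
  Fintype.sum_equiv (transferEquiv e) _ _ fun P => by
    rw [transferEquiv, Equiv.coe_fn_mk, transfer_parts, prod_image (injOn_transferBlock e P)]
    exact prod_congr rfl fun b hb => by rw [card_transferBlock e (P.le hb)]

end Transfer

section Kernel
variable {α β : Type*} [DecidableEq α] [DecidableEq β]

theorem parts_eq_image_part {s : Finset α} (P : Finpartition s) : P.parts = s.image P.part := by
  ext b
  refine ⟨fun hb => ?_, fun hb => ?_⟩
  · obtain ⟨a, ha⟩ := P.nonempty_of_mem_parts hb
    exact mem_image.2 ⟨a, P.le hb ha, P.part_eq_of_mem hb ha⟩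
  · obtain ⟨a, ha, rfl⟩ := mem_image.1 hb
    exact P.part_mem.2 ha

theorem ext_part {s : Finset α} {P Q : Finpartition s} (h : ∀ a ∈ s, P.part a = Q.part a) :
    P = Q := by
  ext1
  rw [P.parts_eq_image_part, Q.parts_eq_image_part]
  exact image_congr h

variable [Fintype α]

def ker (f : α → β) : Finpartition (univ : Finset α) :=
  letI : DecidableRel (Setoid.ker f) := fun a b => decEq (f a) (f b)
  ofSetoid (Setoid.ker f)

theorem mem_part_ker {f : α → β} {a b : α} : b ∈ (ker f).part a ↔ f a = f b := by
  let : DecidableRel (Setoid.ker f) := fun a b => decEq (f a) (f b)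
  exact mem_part_ofSetoid_iff_rel

theorem ker_eq_iff {f : α → β} {P : Finpartition (univ : Finset α)} :
    ker f = P ↔ ∀ a b, b ∈ P.part a ↔ f a = f b := by
  refine ⟨fun h a b => h ▸ mem_part_ker, fun h => ext_part fun a _ => ?_⟩
  ext b
  rw [mem_part_ker, h]

noncomputable def kerFiberEquiv (P : Finpartition (univ : Finset α)) :
    {f : α → β // ker f = P} ≃ (P.parts ↪ β) where
  toFun f :=
    ⟨fun b => f.1 (P.nonempty_of_mem_parts b.2).choose, fun b c h => by
      have hc := (ker_eq_iff.1 f.2 _ _).2 h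
      rw [P.part_eq_of_mem b.2 (P.nonempty_of_mem_parts b.2).choose_spec] at hc
      exact Subtype.ext (P.eq_of_mem_parts c.2 b.2
        (P.nonempty_of_mem_parts c.2).choose_spec hc).symm⟩
  invFun g :=
    ⟨fun a => g ⟨P.part a, P.part_mem.2 (mem_univ a)⟩, ker_eq_iff.2 fun a b => by
      rw [g.injective.eq_iff, Subtype.mk.injEq, eq_comm,
        ← P.mem_part_iff_part_eq_part (mem_univ b) (mem_univ a)]⟩
  left_inv f := by
    ext a
    exact ((ker_eq_iff.1 f.2 _ _).1
      (P.nonempty_of_mem_parts (P.part_mem.2 (mem_univ a))).choose_spec).symm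
  right_inv g := by
    ext b
    exact congrArg g
      (Subtype.ext (P.part_eq_of_mem b.2 (P.nonempty_of_mem_parts b.2).choose_spec))

theorem sum_descFactorial_card_parts (m : ℕ) :
    ∑ P : Finpartition (univ : Finset α), m.descFactorial #P.parts = m ^ Fintype.card α := by
  calc ∑ P : Finpartition (univ : Finset α), m.descFactorial #P.parts
      = ∑ P : Finpartition (univ : Finset α), #{f : α → Fin m | ker f = P} :=
        sum_congr rfl fun P _ => by
          rw [← Fintype.card_subtype, Fintype.card_congr (kerFiberEquiv P),
            Fintype.card_embedding_eq, Fintype.card_coe, Fintype.card_fin]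
    _ = m ^ Fintype.card α := by
        rw [← card_eq_sum_card_fiberwise fun _ _ => mem_univ _, card_univ, Fintype.card_fun,
          Fintype.card_fin]

end Kernel

section Counting
variable {α : Type*} [DecidableEq α]

theorem sum_descPochhammer_eval_card_parts {R : Type*} [CommRing R] (s : Finset α) (x : R) :
    ∑ P : Finpartition s, (descPochhammer R #P.parts).eval x = x ^ #s := by
  have hnat (m : ℕ) : ∑ P : Finpartition s, m.descFactorial #P.parts = m ^ #s := by
    rw [sum_card_parts_congr (Equiv.subtypeUnivEquiv mem_univ).symm, sum_descFactorial_card_parts,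
      Fintype.card_coe]
  have hpoly : ∑ P : Finpartition s, descPochhammer ℤ #P.parts = X ^ #s := by
    refine eq_of_infinite_eval_eq _ _
      (Set.infinite_of_injective_forall_mem Nat.cast_injective fun m => ?_)
    simp only [Set.mem_ofPred_eq, eval_finsetSum, descPochhammer_eval_eq_descFactorial, eval_pow,
      eval_X]
    exact_mod_cast hnat m
  simpa [Polynomial.map_sum, eval_finsetSum] using
    congrArg (fun p => (p.map (Int.castRingHom R)).eval x) hpoly

theorem sum_card_parts_eq_sum_stirling {M : Type*} [AddCommMonoid M] (s : Finset α) {N : ℕ}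
    (hN : #s ≤ N) (f : ℕ → M) :
    ∑ P : Finpartition s, f #P.parts = ∑ ℓ ∈ range (N + 1), stirling #s ℓ • f ℓ := by
  have hmaps (P : Finpartition (univ : Finset (Fin #s))) : #P.parts ∈ range (N + 1) :=
    mem_range.2 (Nat.lt_succ_of_le (P.card_parts_le_card.trans (by simpa using hN)))
  rw [sum_card_parts_congr (s.equivFin.trans (Equiv.subtypeUnivEquiv mem_univ).symm),
    ← sum_fiberwise_of_maps_to fun P _ => hmaps P]
  refine sum_congr rfl fun ℓ _ => ?_
  rw [sum_congr rfl fun P hP => by rw [(mem_filter.1 hP).2], sum_const, stirling,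
    Nat.card_eq_fintype_card, Fintype.card_subtype]

theorem sum_prod_ite_two_le_card_eq_noSingletonPartitions (s : Finset α) :
    ∑ P : Finpartition s, ∏ b ∈ P.parts, (if 2 ≤ #b then 1 else 0 : ℚ) =
      noSingletonPartitions #s := by
  rw [sum_prod_card_congr (s.equivFin.trans (Equiv.subtypeUnivEquiv mem_univ).symm)
    fun n => if 2 ≤ n then (1 : ℚ) else 0]
  simp only [prod_boole]
  rw [noSingletonPartitions, Nat.card_eq_fintype_card, Fintype.card_subtype, natCast_card_filter]
  congr!

end Counting

end Finpartition

section SumRule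
variable {α : Type*} [DecidableEq α]

theorem beta_card_eq_subsetConv (T : Finset α) (Q : ℚ) :
    beta #T Q = subsetConv (fun U => (descPochhammer ℚ #U).eval Q) (fun U => (-1) ^ #U) T := by
  rw [subsetConv_card (fun i => (descPochhammer ℚ i).eval Q) (fun i => (-1) ^ i), beta]
  exact sum_congr rfl fun i _ => by ring

theorem subsetConv_negOnePow_noSingleton (s : Finset α) :
    subsetConv (fun t => ∑ P : Finpartition t, (-1 : ℚ) ^ #P.parts)
      (fun t => ∑ P : Finpartition t, ∏ b ∈ P.parts, if 2 ≤ #b then 1 else 0) s =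
      (-1) ^ #s := by
  have hpow (T : Finset (Finset α)) : (-1 : ℚ) ^ #T = ∏ _b ∈ T, -1 := (prod_const _).symm
  simp only [hpow]
  rw [← Finpartition.sum_subsetConv_parts (fun T => ∏ _b ∈ T, (-1 : ℚ))
    (fun T => ∏ b ∈ T, if 2 ≤ #b then 1 else 0)]
  simp only [prod_subsetConv]
  rw [Finpartition.sum_prod_parts_of_eq_zero _ fun b hb => by simp [hb]]
  simp

theorem subsetConv_beta_noSingleton (s : Finset α) (Q : ℚ) :
    subsetConv (fun t => ∑ P : Finpartition t, beta #P.parts Q)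
      (fun t => ∑ P : Finpartition t, ∏ b ∈ P.parts, if 2 ≤ #b then 1 else 0) s =
      (Q - 1) ^ #s := by
  have hbeta : (fun t : Finset α => ∑ P : Finpartition t, beta #P.parts Q) =
      subsetConv (fun t => Q ^ #t) (fun t => ∑ P : Finpartition t, (-1 : ℚ) ^ #P.parts) := by
    ext t
    simp_rw [beta_card_eq_subsetConv, Finpartition.sum_subsetConv_parts,
      Finpartition.sum_descPochhammer_eval_card_parts]
  rw [hbeta, subsetConv_assoc, _root_.funext subsetConv_negOnePow_noSingleton, sub_eq_add_neg,
    ← sum_pow_mul_eq_add_pow, subsetConv]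
  exact sum_congr rfl fun t ht => by rw [card_sdiff_of_subset (mem_powerset.1 ht)]

end SumRule

/-- Sum rule with no unmarked singletons:
`∑_{ℓ=0}^{k} (1/ℓ!) β_ℓ |Ã_k^{(ℓ)}| = (Q-1)^k`, where
`|Ã_k^{(ℓ)}| = ℓ! ∑_{p=0}^{k} C(k,p) S(p,ℓ) S'_{k-p}` counts marked partitions
of a `k`-set with `ℓ` marked distinguishable blocks all of whose unmarked
blocks have at least two elements, `S'_n` being the number of partitions of an
`n`-set with no singletons. -/
theorem sum_rule_no_unmarked_singletons (k : ℕ) (Q : ℚ) :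
    ∑ ℓ ∈ Finset.range (k + 1),
        (1 / (ℓ.factorial : ℚ)) * beta ℓ Q *
          ((ℓ.factorial * ∑ p ∈ Finset.range (k + 1),
            k.choose p * stirling p ℓ * noSingletonPartitions (k - p) : ℕ) : ℚ) =
      (Q - 1) ^ k := by
  have hcard : #(univ : Finset (Fin k)) = k := by rw [card_univ, Fintype.card_fin]
  have hcancel (ℓ : ℕ) (x : ℚ) :
      1 / (ℓ.factorial : ℚ) * beta ℓ Q * (ℓ.factorial * x) = beta ℓ Q * x := by
    field_simp
  calc _ = ∑ p ∈ range (k + 1), (k.choose p : ℚ) *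
          ((∑ ℓ ∈ range (k + 1), stirling p ℓ • beta ℓ Q) * noSingletonPartitions (k - p)) := by
        push_cast
        simp only [hcancel, mul_sum, sum_mul, nsmul_eq_mul]
        rw [sum_comm]
        exact sum_congr rfl fun p _ => sum_congr rfl fun ℓ _ => by ring
    _ = subsetConv (fun t => ∑ P : Finpartition t, beta #P.parts Q)
          (fun t => ∑ P : Finpartition t, ∏ b ∈ P.parts, if 2 ≤ #b then 1 else 0)
          (univ : Finset (Fin k)) := by
        simp_rw [Finpartition.sum_prod_ite_two_le_card_eq_noSingletonPartitions,
          fun t : Finset (Fin k) => Finpartition.sum_card_parts_eq_sum_stirling t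
            ((card_le_univ t).trans_eq (Fintype.card_fin k)) (beta · Q)]
        rw [subsetConv_card (fun n => ∑ ℓ ∈ range (k + 1), stirling n ℓ • beta ℓ Q)
          (fun n => (noSingletonPartitions n : ℚ)), hcard]
    _ = (Q - 1) ^ k := by rw [subsetConv_beta_noSingleton, hcard]
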